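/- arXiv:math/0505301 — 2 statements merged into one kernel-verified Lean document; each statement's English description precedes it below -/
import Mathlib

section
/- For every m ≥ 2, the inradius s_m of C_m satisfies 2/√(log m + 5) < s_m < 2/√(log m). -/
open scoped BigOperators
noncomputable section

def A (m : ℕ) : Set (EuclideanSpace ℝ (Fin m)) :=
  {v | (∀ i, v i = -1 ∨ v i = 0 ∨ v i = 1) ∧ v ≠ 0}

def B (m : ℕ) : Set (EuclideanSpace ℝ (Fin m)) :=
  (fun v => ‖v‖⁻¹ • v) '' A m

def s (m : ℕ) : ℝ :=
  sSup {r : ℝ | 0 ≤ r ∧ Metric.closedBall (0 : EuclideanSpace ℝ (Fin m)) r ⊆ convexHull ℝ (B m)}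

/-!
Let `d = (√(i+1) - √i)_{i<m}`. Since `(√(i+1) - √i)⁻¹ = √(i+1) + √i` lies between `2√i` and
`2√(i+1)`, `4‖d‖²` lies strictly between `H_m` and `4 + H_{m-1}`, and the harmonic bounds
`log (m+1) ≤ H_m ≤ 1 + log m` turn this into `log m < 4‖d‖² < log m + 5`. So it suffices to show
`s_m = ‖d‖⁻¹`.

Upper bound: `d` is decreasing, so for `v ∈ A_m` with support `S`,
`⟪d, v⟫ ≤ ∑_{i∈S} d_i ≤ ∑_{i<|S|} d_i = √|S| = ‖v‖`; hence `C_m` lies in the half-space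
`⟪d, ·⟫ ≤ 1`, which the ball of radius `r` only fits in when `r ≤ ‖d‖⁻¹`.

Lower bound: if `⟪y, ·⟫ < c` on `B_m`, testing the sign vectors of `y` gives
`∑_{i∈S} |y_i| ≤ c √|S|` for every `S`. For the decreasing rearrangement `b` of `|y|`, Abel
summation turns these into `‖y‖² ≤ c ⟪d, b⟫ ≤ c ‖d‖ ‖y‖`, so no point of norm `≤ ‖d‖⁻¹` can be
separated from `C_m`.
-/

open Real Finset Metric
open scoped InnerProductSpace

def sqrtGap (i : ℕ) : ℝ := √(i + 1) - √i

def sqrtGapSqSum (m : ℕ) : ℝ := ∑ i ∈ range m, sqrtGap i ^ 2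

lemma sqrtGap_mul_add (k : ℕ) : sqrtGap k * (√(k + 1) + √k) = 1 := by
  have h₁ : √((k : ℝ) + 1) ^ 2 = k + 1 := sq_sqrt (by positivity)
  have h₂ : √(k : ℝ) ^ 2 = k := sq_sqrt (by positivity)
  rw [sqrtGap]
  linear_combination h₁ - h₂

lemma sqrtGap_eq_inv (k : ℕ) : sqrtGap k = (√(k + 1) + √k)⁻¹ :=
  eq_inv_of_mul_eq_one_left (sqrtGap_mul_add k)

lemma sqrtGap_nonneg (i : ℕ) : 0 ≤ sqrtGap i := by
  rw [sqrtGap_eq_inv]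
  positivity

lemma sqrtGap_antitone : Antitone sqrtGap := by
  intro i j hij
  have hij' : (i : ℝ) ≤ j := by exact_mod_cast hij
  rw [sqrtGap_eq_inv, sqrtGap_eq_inv]
  gcongr

lemma sum_range_sqrtGap (k : ℕ) : ∑ i ∈ range k, sqrtGap i = √k := by
  simpa [sqrtGap] using sum_range_sub (fun i : ℕ => √i) k

lemma inv_succ_lt_four_mul_sqrtGap_sq (k : ℕ) : (k + 1 : ℝ)⁻¹ < 4 * sqrtGap k ^ 2 := by
  have hlt : √(k : ℝ) < √(k + 1) := sqrt_lt_sqrt (by positivity) (by linarith)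
  have hsq : (√(k + 1) + √k) ^ 2 < 4 * (k + 1 : ℝ) := by
    nlinarith [sq_sqrt (show (0 : ℝ) ≤ k + 1 by positivity), sqrt_nonneg (k : ℝ)]
  calc (k + 1 : ℝ)⁻¹ = 4 * (4 * (k + 1 : ℝ))⁻¹ := by field_simp
    _ < 4 * ((√(k + 1) + √k) ^ 2)⁻¹ := by gcongr
    _ = 4 * sqrtGap k ^ 2 := by rw [sqrtGap_eq_inv, inv_pow]

lemma four_mul_sqrtGap_sq_lt {k : ℕ} (hk : 1 ≤ k) : 4 * sqrtGap k ^ 2 < (k : ℝ)⁻¹ := by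
  have hk' : (1 : ℝ) ≤ k := by exact_mod_cast hk
  have hlt : √(k : ℝ) < √(k + 1) := sqrt_lt_sqrt (by positivity) (by linarith)
  have hsq : 4 * (k : ℝ) < (√(k + 1) + √k) ^ 2 := by
    nlinarith [sq_sqrt (show (0 : ℝ) ≤ k by positivity), sqrt_pos.2 (by linarith : (0:ℝ) < k)]
  calc 4 * sqrtGap k ^ 2 = 4 * ((√(k + 1) + √k) ^ 2)⁻¹ := by rw [sqrtGap_eq_inv, inv_pow]
    _ < 4 * (4 * (k : ℝ))⁻¹ := by gcongr
    _ = (k : ℝ)⁻¹ := by field_simp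

lemma cast_harmonic_eq_sum (n : ℕ) : (harmonic n : ℝ) = ∑ i ∈ range n, (i + 1 : ℝ)⁻¹ := by
  simp [harmonic]

lemma log_lt_four_mul_sqrtGapSqSum {m : ℕ} (hm : 1 ≤ m) : log m < 4 * sqrtGapSqSum m := by
  calc log m < log (m + 1 : ℕ) := by
        gcongr
        omega
    _ ≤ harmonic m := log_add_one_le_harmonic m
    _ < ∑ i ∈ range m, 4 * sqrtGap i ^ 2 := by
        rw [cast_harmonic_eq_sum]
        exact sum_lt_sum_of_nonempty ⟨0, mem_range.2 hm⟩
          fun i _ => inv_succ_lt_four_mul_sqrtGap_sq i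
    _ = 4 * sqrtGapSqSum m := by rw [sqrtGapSqSum, mul_sum]

lemma four_mul_sqrtGapSqSum_lt {m : ℕ} (hm : 2 ≤ m) : 4 * sqrtGapSqSum m < log m + 5 := by
  obtain ⟨n, rfl⟩ : ∃ n, m = n + 1 := ⟨m - 1, by omega⟩
  have hn : 1 ≤ n := by omega
  have htail : ∑ i ∈ range n, 4 * sqrtGap (i + 1) ^ 2 < (harmonic n : ℝ) := by
    rw [cast_harmonic_eq_sum]
    exact sum_lt_sum_of_nonempty ⟨0, mem_range.2 hn⟩
      fun i _ => by exact_mod_cast four_mul_sqrtGap_sq_lt (Nat.le_add_left 1 i)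
  have hlog : log n ≤ log (n + 1 : ℕ) := by
    gcongr
    omega
  have hgap0 : sqrtGap 0 = 1 := by simp [sqrtGap]
  unfold sqrtGapSqSum
  rw [mul_sum, sum_range_succ', hgap0]
  linarith [harmonic_le_one_add_log n]

lemma Antitone.sum_le_sum_range_card {M : Type*} [AddCommMonoid M] [PartialOrder M]
    [IsOrderedAddMonoid M] {f : ℕ → M} (hf : Antitone f) (S : Finset ℕ) :
    ∑ i ∈ S, f i ≤ ∑ i ∈ range #S, f i := by
  induction S using Finset.induction_on_max with
  | empty => simp
  | insert a S ha ih =>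
    have haS : a ∉ S := fun h => lt_irrefl a (ha a h)
    have hcard : #S ≤ a := by
      simpa using card_le_card fun b hb => mem_range.2 (ha b hb)
    rw [sum_insert haS, card_insert_of_notMem haS, sum_range_succ, add_comm]
    exact add_le_add ih (hf hcard)

lemma sum_mul_le_sum_mul_of_sum_range_le {b w c : ℕ → ℝ} {n : ℕ} (hc : Antitone c)
    (hc₀ : ∀ i, 0 ≤ c i) (h : ∀ k ≤ n, ∑ i ∈ range k, b i ≤ ∑ i ∈ range k, w i) :
    ∑ i ∈ range n, b i * c i ≤ ∑ i ∈ range n, w i * c i := by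
  have hG : ∀ k ≤ n, 0 ≤ ∑ i ∈ range k, (w i - b i) := fun k hk => by
    rw [sum_sub_distrib]; exact sub_nonneg.2 (h k hk)
  rw [← sub_nonneg, ← sum_sub_distrib]
  have hsmul : ∑ i ∈ range n, (w i * c i - b i * c i) = ∑ i ∈ range n, c i • (w i - b i) :=
    sum_congr rfl fun i _ => by rw [smul_eq_mul]; ring
  rw [hsmul, sum_range_by_parts]
  refine sub_nonneg.2 (le_trans (sum_nonpos fun i hi => ?_) (smul_nonneg (hc₀ _) (hG n le_rfl)))
  have hi : i + 1 ≤ n := by rw [mem_range] at hi; omega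
  exact smul_nonpos_of_nonpos_of_nonneg (sub_nonpos.2 (hc i.le_succ)) (hG _ hi)

lemma sum_sq_le_of_sum_range_le_mul_sqrt {b : ℕ → ℝ} {t : ℝ} {n : ℕ} (hb : Antitone b)
    (hb₀ : ∀ i, 0 ≤ b i) (h : ∀ k ≤ n, ∑ i ∈ range k, b i ≤ t * √k) :
    ∑ i ∈ range n, b i ^ 2 ≤ t ^ 2 * sqrtGapSqSum n := by
  set Q := ∑ i ∈ range n, b i ^ 2
  set X := ∑ i ∈ range n, sqrtGap i * b i
  have hQ : 0 ≤ Q := sum_nonneg fun i _ => sq_nonneg _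
  have habel : Q ≤ t * X := by
    have := sum_mul_le_sum_mul_of_sum_range_le (w := fun i => t * sqrtGap i) hb hb₀
      fun k hk => by simpa [← mul_sum, sum_range_sqrtGap] using h k hk
    simpa [Q, X, sq, mul_sum, mul_assoc] using this
  have hcs : X ^ 2 ≤ sqrtGapSqSum n * Q := sum_mul_sq_le_sq_mul_sq _ _ _
  have hD : 0 ≤ sqrtGapSqSum n := sum_nonneg fun i _ => sq_nonneg _
  by_contra! hlt
  have hQpos : 0 < Q := lt_of_le_of_lt (by positivity) hlt
  nlinarith [mul_le_mul habel habel hQ (hQ.trans habel), mul_le_mul_of_nonneg_left hcs (sq_nonneg t),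
    mul_lt_mul_of_pos_right hlt hQpos]

lemma sum_sq_le_of_sum_le_mul_sqrt_card {m : ℕ} {a : Fin m → ℝ} {t : ℝ} (ha : 0 ≤ a)
    (h : ∀ S : Finset (Fin m), ∑ i ∈ S, a i ≤ t * √(#S : ℝ)) :
    ∑ i, a i ^ 2 ≤ t ^ 2 * sqrtGapSqSum m := by
  set σ := Tuple.sort (-a)
  have hσ : Antitone (a ∘ σ) := fun i j hij => neg_le_neg_iff.1 (Tuple.monotone_sort (-a) hij)
  set b : ℕ → ℝ := fun k => if hk : k < m then a (σ ⟨k, hk⟩) else 0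
  have hb₀ : ∀ k, 0 ≤ b k := fun k => by
    simp only [b]; split_ifs
    exacts [ha _, le_rfl]
  have hb : Antitone b := fun i j hij => by
    simp only [b]; split_ifs with hj hi hi
    · exact hσ (Fin.mk_le_mk.2 hij)
    · omega
    · exact ha _
    · exact le_rfl
  have hbσ : ∀ i : Fin m, b i = a (σ i) := fun i => by simp [b]
  have hpartial : ∀ k ≤ m, ∑ i ∈ range k, b i ≤ t * √k := fun k hk => by
    have hinj : Function.Injective fun i : Fin k => σ (Fin.castLE hk i) :=
      σ.injective.comp (Fin.castLE_injective hk)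
    have hbk : ∀ i : Fin k, b i = a (σ (Fin.castLE hk i)) := fun i => hbσ (Fin.castLE hk i)
    simpa [sum_image hinj.injOn, hbk, card_image_of_injective _ hinj, ← Fin.sum_univ_eq_sum_range,
      hbσ] using h (univ.image fun i : Fin k => σ (Fin.castLE hk i))
  calc ∑ i, a i ^ 2 = ∑ i, a (σ i) ^ 2 := (Equiv.sum_comp σ fun i => a i ^ 2).symm
    _ = ∑ i ∈ range m, b i ^ 2 := by simp only [← hbσ, Fin.sum_univ_eq_sum_range (fun i => b i ^ 2)]
    _ ≤ t ^ 2 * sqrtGapSqSum m := sum_sq_le_of_sum_range_le_mul_sqrt hb hb₀ hpartial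

section ConvexHull

variable {E : Type*} [NormedAddCommGroup E] [InnerProductSpace ℝ E]

lemma mul_norm_le_one_of_closedBall_subset_convexHull {K : Set E} {r : ℝ} {d : E} (hr : 0 ≤ r)
    (hK : closedBall 0 r ⊆ convexHull ℝ K) (hd : ∀ b ∈ K, ⟪d, b⟫_ℝ ≤ 1) : r * ‖d‖ ≤ 1 := by
  rcases eq_or_ne d 0 with rfl | hd0
  · simp
  have hdpos : 0 < ‖d‖ := norm_pos_iff.2 hd0
  have hx : (r / ‖d‖) • d ∈ closedBall (0 : E) r := by
    rw [mem_closedBall_zero_iff, norm_smul, norm_div, norm_norm, Real.norm_of_nonneg hr,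
      div_mul_cancel₀ _ hdpos.ne']
  have hhalf : convexHull ℝ K ⊆ {z | ⟪d, z⟫_ℝ ≤ 1} :=
    convexHull_min hd (convex_halfSpace_le (innerₛₗ ℝ d).isLinear 1)
  have := hhalf (hK hx)
  rwa [Set.mem_ofPred_eq, real_inner_smul_right, real_inner_self_eq_norm_sq, sq, ← mul_assoc,
    div_mul_cancel₀ _ hdpos.ne'] at this

lemma closedBall_subset_convexHull_of_mul_norm_le [CompleteSpace E] {K : Set E}
    (hK : IsClosed (convexHull ℝ K)) {r : ℝ}
    (h : ∀ y c, (∀ b ∈ K, ⟪y, b⟫_ℝ < c) → r * ‖y‖ ≤ c) : closedBall 0 r ⊆ convexHull ℝ K := by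
  intro x hx
  by_contra hxK
  obtain ⟨f, c, hfK, hfx⟩ := geometric_hahn_banach_closed_point (convex_convexHull ℝ K) hK hxK
  set y := (InnerProductSpace.toDual ℝ E).symm f
  have hy : ∀ z, ⟪y, z⟫_ℝ = f z := fun z => InnerProductSpace.toDual_symm_apply
  have hyK := h y c fun b hb => (hy b).trans_lt (hfK b (subset_convexHull ℝ K hb))
  have hxr : ‖x‖ ≤ r := mem_closedBall_zero_iff.1 hx
  have := real_inner_le_norm y x
  rw [hy] at this
  nlinarith [norm_nonneg y]

end ConvexHull

variable {m : ℕ}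

lemma A_finite : (A m).Finite := by
  refine ((Set.Finite.pi fun _ => Set.toFinite {-1, 0, 1}).image (WithLp.toLp 2)).subset ?_
  intro v hv
  refine ⟨v.ofLp, ?_, rfl⟩
  simpa [Set.mem_pi] using hv.1

lemma inner_eq_sum_mul (x y : EuclideanSpace ℝ (Fin m)) : ⟪x, y⟫_ℝ = ∑ i, x i * y i := by
  simp [PiLp.inner_apply, mul_comm]

lemma norm_sq_eq_card_support {v : EuclideanSpace ℝ (Fin m)}
    (hv : ∀ i, v i = -1 ∨ v i = 0 ∨ v i = 1) : ‖v‖ ^ 2 = #{i | v i ≠ 0} := by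
  rw [EuclideanSpace.norm_sq_eq, card_filter, Nat.cast_sum]
  refine sum_congr rfl fun i _ => ?_
  rcases hv i with h | h | h <;> simp [h]

lemma inner_le_sum_support {d v : EuclideanSpace ℝ (Fin m)} (hd : ∀ i, 0 ≤ d i)
    (hv : ∀ i, v i = -1 ∨ v i = 0 ∨ v i = 1) : ⟪d, v⟫_ℝ ≤ ∑ i with v i ≠ 0, d i := by
  rw [inner_eq_sum_mul, sum_filter]
  refine sum_le_sum fun i _ => ?_
  rcases hv i with h | h | h <;> simp [h, hd i]

lemma exists_mem_A_inner_eq_sum_abs (y : EuclideanSpace ℝ (Fin m)) {S : Finset (Fin m)}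
    (hS : S.Nonempty) : ∃ v ∈ A m, #{i | v i ≠ 0} = #S ∧ ⟪y, v⟫_ℝ = ∑ i ∈ S, |y i| := by
  set v : EuclideanSpace ℝ (Fin m) :=
    WithLp.toLp 2 fun i => if i ∈ S then (if 0 ≤ y i then 1 else -1) else 0
  have hsupp : ({i | v i ≠ 0} : Finset (Fin m)) = S := by
    ext i
    by_cases hi : i ∈ S
    · simp only [v, hi, mem_filter, mem_univ, true_and, if_true, iff_true]
      split_ifs <;> norm_num
    · simp [v, hi]
  refine ⟨v, ⟨fun i => ?_, fun hv0 => ?_⟩, by rw [hsupp], ?_⟩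
  · simp only [v]
    split_ifs <;> simp
  · obtain ⟨i, hi⟩ := hS
    rw [← hsupp, hv0] at hi
    simp at hi
  · calc ⟪y, v⟫_ℝ = ∑ i, if i ∈ S then |y i| else 0 := by
          rw [inner_eq_sum_mul]
          refine sum_congr rfl fun i _ => ?_
          simp only [v]
          split_ifs with hi h
          · rw [abs_of_nonneg h, mul_one]
          · rw [abs_of_neg (not_le.1 h), mul_neg_one]
          · rw [mul_zero]
      _ = ∑ i ∈ S, |y i| := by rw [sum_ite_mem, univ_inter]

def sqrtGapVector (m : ℕ) : EuclideanSpace ℝ (Fin m) := WithLp.toLp 2 fun i => sqrtGap i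

lemma norm_sqrtGapVector_sq : ‖sqrtGapVector m‖ ^ 2 = sqrtGapSqSum m := by
  simp [EuclideanSpace.norm_sq_eq, sqrtGapVector, sqrtGapSqSum,
    Fin.sum_univ_eq_sum_range (fun i => sqrtGap i ^ 2)]

lemma inner_sqrtGapVector_le_one {b : EuclideanSpace ℝ (Fin m)} (hb : b ∈ B m) :
    ⟪sqrtGapVector m, b⟫_ℝ ≤ 1 := by
  obtain ⟨v, ⟨hv, -⟩, rfl⟩ := hb
  set T : Finset (Fin m) := {i | v i ≠ 0}
  have hnorm : ‖v‖ = √(#T : ℝ) := by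
    rw [← norm_sq_eq_card_support hv, sqrt_sq (norm_nonneg v)]
  have hsum : ∑ i ∈ T, sqrtGap i ≤ √(#T : ℝ) := by
    simpa [sum_map, sum_range_sqrtGap] using
      sqrtGap_antitone.sum_le_sum_range_card (T.map Fin.valEmbedding)
  have hinner : ⟪sqrtGapVector m, v⟫_ℝ ≤ ‖v‖ :=
    hnorm ▸ (inner_le_sum_support (fun i => sqrtGap_nonneg i) hv).trans hsum
  rw [real_inner_smul_right]
  exact inv_mul_le_one_of_le₀ hinner (norm_nonneg v)

lemma sum_abs_le_of_inner_lt {y : EuclideanSpace ℝ (Fin m)} {c : ℝ}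
    (hy : ∀ b ∈ B m, ⟪y, b⟫_ℝ < c) (S : Finset (Fin m)) : ∑ i ∈ S, |y i| ≤ c * √(#S : ℝ) := by
  rcases S.eq_empty_or_nonempty with rfl | hS
  · simp
  obtain ⟨v, hvA, hcard, hinner⟩ := exists_mem_A_inner_eq_sum_abs y hS
  have hnorm : ‖v‖ = √(#S : ℝ) := by
    rw [← hcard, ← norm_sq_eq_card_support hvA.1, sqrt_sq (norm_nonneg v)]
  have := hy _ ⟨v, hvA, rfl⟩
  rw [real_inner_smul_right, hinner, hnorm,
    inv_mul_lt_iff₀ (sqrt_pos.2 (Nat.cast_pos.2 hS.card_pos))] at this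
  linarith

lemma norm_le_mul_sqrt_of_inner_lt (hm : 1 ≤ m) {y : EuclideanSpace ℝ (Fin m)} {c : ℝ}
    (hy : ∀ b ∈ B m, ⟪y, b⟫_ℝ < c) : ‖y‖ ≤ c * √(sqrtGapSqSum m) := by
  have hc : 0 ≤ c := by
    have := sum_abs_le_of_inner_lt hy {⟨0, hm⟩}
    rw [sum_singleton, card_singleton, Nat.cast_one, sqrt_one, mul_one] at this
    exact (abs_nonneg _).trans this
  have hsq : ‖y‖ ^ 2 ≤ c ^ 2 * sqrtGapSqSum m := by
    simpa [EuclideanSpace.norm_sq_eq] using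
      sum_sq_le_of_sum_le_mul_sqrt_card (fun i => abs_nonneg (y i)) (sum_abs_le_of_inner_lt hy)
  calc ‖y‖ = √(‖y‖ ^ 2) := (sqrt_sq (norm_nonneg y)).symm
    _ ≤ √(c ^ 2 * sqrtGapSqSum m) := sqrt_le_sqrt hsq
    _ = c * √(sqrtGapSqSum m) := by rw [sqrt_mul (sq_nonneg c), sqrt_sq hc]

lemma s_eq_inv_sqrt_sqrtGapSqSum (hm : 1 ≤ m) : s m = (√(sqrtGapSqSum m))⁻¹ := by
  have hD : 0 < √(sqrtGapSqSum m) := by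
    refine sqrt_pos.2 ?_
    linarith [log_lt_four_mul_sqrtGapSqSum hm, log_natCast_nonneg m]
  refine IsGreatest.csSup_eq ⟨⟨inv_nonneg.2 hD.le, ?_⟩, fun r ⟨hr, hball⟩ => ?_⟩
  · refine closedBall_subset_convexHull_of_mul_norm_le ((A_finite.image _).isClosed_convexHull ℝ)
      fun y c hy => ?_
    rw [inv_mul_le_iff₀ hD, mul_comm]
    exact norm_le_mul_sqrt_of_inner_lt hm hy
  · have := mul_norm_le_one_of_closedBall_subset_convexHull hr hball
      fun b hb => inner_sqrtGapVector_le_one hb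
    rw [← sqrt_sq (norm_nonneg (sqrtGapVector m)), norm_sqrtGapVector_sq] at this
    rwa [← one_div, le_div_iff₀ hD]

theorem stmt13 (m : ℕ) (hm : 2 ≤ m) :
    2 / Real.sqrt (Real.log m + 5) < s m ∧ s m < 2 / Real.sqrt (Real.log m) := by
  have hlower := log_lt_four_mul_sqrtGapSqSum (m := m) (by omega)
  have hupper := four_mul_sqrtGapSqSum_lt hm
  have hlog : 0 < log m := log_pos (by exact_mod_cast hm)
  have hs : s m = 2 / √(4 * sqrtGapSqSum m) := by
    rw [s_eq_inv_sqrt_sqrtGapSqSum (by omega), sqrt_mul zero_le_four,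
      show √(4 : ℝ) = 2 by rw [show (4 : ℝ) = 2 ^ 2 by norm_num, sqrt_sq zero_le_two]]
    field_simp
  have hD : 0 < 4 * sqrtGapSqSum m := hlog.trans hlower
  rw [hs]
  exact ⟨div_lt_div_of_pos_left two_pos (sqrt_pos.2 hD) (sqrt_lt_sqrt hD.le hupper),
    div_lt_div_of_pos_left two_pos (sqrt_pos.2 hlog) (sqrt_lt_sqrt hlog.le hlower)⟩
end
end

section
/- The closed ball of radius s = (Σ_{k=1}^m 1/(√k + √(k−1))²)^{-1/2} centered at the origin is contained in C_m = conv(B_m). -/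
open scoped BigOperators
noncomputable section

open Finset

/-! Since `conv B_m` is closed and convex, it suffices to find for every `y` some `b ∈ B_m` with
`s ‖y‖ ≤ ⟪y, b⟫`. Let `a₀ ≥ a₁ ≥ ⋯` be the decreasing rearrangement of the `|y i|` and
`S_k = a₀ + ⋯ + a_k`; the normalized sign vector of `y` on its `k + 1` largest coordinates lies in
`B_m` and has `⟪y, b⟫ = S_k / √(k + 1)`. If `t` is the largest of these values, then
`S_k ≤ t √(k + 1) = t ∑_{j ≤ k} (√(j + 1) - √j)`, and Abel summation against the antitone `a` gives
`‖y‖² = ∑ a_k² ≤ t ∑ a_k (√(k + 1) - √k)`. By Cauchy–Schwarz the right side is at most `t ‖y‖ / s`,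
because `(√(k + 1) - √k)² = 1 / (√(k + 1) + √k)²`. -/

theorem Antitone.mul_sum_range_le_sum_range_mul {a e : ℕ → ℝ} (ha : Antitone a) {m : ℕ}
    (he : ∀ n ≤ m, 0 ≤ ∑ j ∈ range n, e j) :
    a (m - 1) * ∑ j ∈ range m, e j ≤ ∑ j ∈ range m, a j * e j := by
  induction m with
  | zero => simp
  | succ m ih =>
    have hmono : a m ≤ a (m - 1) := ha (Nat.sub_le m 1)
    have hE : 0 ≤ ∑ j ∈ range m, e j := he m m.le_succ
    have ih' := ih fun n hn => he n (hn.trans m.le_succ)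
    rw [sum_range_succ, sum_range_succ, Nat.add_sub_cancel]
    nlinarith

theorem Antitone.sum_range_mul_le_of_sum_range_le {a b c : ℕ → ℝ} (ha : Antitone a)
    (ha0 : ∀ k, 0 ≤ a k) {m : ℕ} (hbc : ∀ n ≤ m, ∑ j ∈ range n, b j ≤ ∑ j ∈ range n, c j) :
    ∑ j ∈ range m, a j * b j ≤ ∑ j ∈ range m, a j * c j := by
  have key := ha.mul_sum_range_le_sum_range_mul (e := c - b) fun n hn => by
    simpa [sum_sub_distrib] using hbc n hn
  have hnonneg : 0 ≤ a (m - 1) * ∑ j ∈ range m, (c - b) j :=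
    mul_nonneg (ha0 _) (by simpa [sum_sub_distrib] using hbc m le_rfl)
  simp only [Pi.sub_apply, mul_sub, sum_sub_distrib] at key hnonneg
  linarith

theorem Real.sqrt_add_one_sub_sqrt {x : ℝ} (hx : 0 ≤ x) :
    √(x + 1) - √x = (√(x + 1) + √x)⁻¹ := by
  refine eq_inv_of_mul_eq_one_left ?_
  nlinarith [sq_sqrt hx, sq_sqrt (by linarith : 0 ≤ x + 1)]

theorem sum_range_sqrt_succ_sub_sqrt (n : ℕ) :
    ∑ k ∈ range n, (√((k : ℝ) + 1) - √k) = √n := by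
  simpa using sum_range_sub (fun k : ℕ => √(k : ℝ)) n

theorem Antitone.sqrt_sum_sq_le_of_sum_range_le {a : ℕ → ℝ} (ha : Antitone a)
    (ha0 : ∀ k, 0 ≤ a k) {m : ℕ} {t : ℝ} (ht0 : 0 ≤ t)
    (ht : ∀ k < m, ∑ j ∈ range (k + 1), a j ≤ t * √((k : ℝ) + 1)) :
    √(∑ k ∈ range m, a k ^ 2) ≤ t * √(∑ k ∈ range m, (√((k : ℝ) + 1) - √k) ^ 2) := by
  set q := √(∑ k ∈ range m, a k ^ 2)
  set r := √(∑ k ∈ range m, (√((k : ℝ) + 1) - √k) ^ 2)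
  have abel : ∑ k ∈ range m, a k * a k
      ≤ ∑ k ∈ range m, a k * (t * (√((k : ℝ) + 1) - √k)) := by
    refine ha.sum_range_mul_le_of_sum_range_le ha0 fun n hn => ?_
    rw [← mul_sum, sum_range_sqrt_succ_sub_sqrt]
    rcases n with _ | k
    · simp
    · exact_mod_cast ht k hn
  have cauchySchwarz := Real.sum_mul_le_sqrt_mul_sqrt (range m) a fun k => √((k : ℝ) + 1) - √k
  have hq : q ^ 2 ≤ t * (q * r) := by
    calc q ^ 2 = ∑ k ∈ range m, a k * a k := by
          rw [Real.sq_sqrt (sum_nonneg fun k _ => sq_nonneg _)]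
          simp only [sq]
      _ ≤ t * ∑ k ∈ range m, a k * (√((k : ℝ) + 1) - √k) := by
          simpa only [mul_left_comm _ t, ← mul_sum] using abel
      _ ≤ t * (q * r) := mul_le_mul_of_nonneg_left cauchySchwarz ht0
  have htr : 0 ≤ t * r := mul_nonneg ht0 (Real.sqrt_nonneg _)
  nlinarith

theorem Antitone.exists_sqrt_sum_sq_le {a : ℕ → ℝ} (ha : Antitone a) (ha0 : ∀ k, 0 ≤ a k)
    {m : ℕ} (hm : 0 < m) :
    ∃ k < m, √(∑ k ∈ range m, a k ^ 2)
      ≤ (∑ j ∈ range (k + 1), a j) / √((k : ℝ) + 1)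
        * √(∑ k ∈ range m, (√((k : ℝ) + 1) - √k) ^ 2) := by
  obtain ⟨k, hk, hmax⟩ := exists_max_image (range m)
    (fun k : ℕ => (∑ j ∈ range (k + 1), a j) / √((k : ℝ) + 1)) ⟨0, mem_range.2 hm⟩
  refine ⟨k, mem_range.1 hk, ha.sqrt_sum_sq_le_of_sum_range_le ha0
    (div_nonneg (sum_nonneg fun j _ => ha0 j) (Real.sqrt_nonneg _)) fun i hi => ?_⟩
  rw [← div_le_iff₀ (by positivity)]
  exact hmax i (mem_range.2 hi)

section DecreasingRearrangement

variable {m : ℕ} (y : Fin m → ℝ)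

def sortedAbs (k : ℕ) : ℝ :=
  if h : k < m then |y (Tuple.sort (fun i => -|y i|) ⟨k, h⟩)| else 0

theorem sortedAbs_of_lt {k : ℕ} (hk : k < m) :
    sortedAbs y k = |y (Tuple.sort (fun i => -|y i|) ⟨k, hk⟩)| :=
  dif_pos hk

theorem sortedAbs_nonneg (k : ℕ) : 0 ≤ sortedAbs y k := by
  unfold sortedAbs
  split <;> positivity

theorem antitone_sortedAbs : Antitone (sortedAbs y) := by
  intro i j hij
  by_cases hj : j < m
  · have hsort :=
      Tuple.monotone_sort (fun i => -|y i|) (a := ⟨i, hij.trans_lt hj⟩) (b := ⟨j, hj⟩) hij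
    simp only [Function.comp_apply, neg_le_neg_iff] at hsort
    rwa [sortedAbs_of_lt y hj, sortedAbs_of_lt y (hij.trans_lt hj)]
  · rw [sortedAbs, dif_neg hj]
    exact sortedAbs_nonneg y i

theorem sum_range_sortedAbs_sq : ∑ k ∈ range m, sortedAbs y k ^ 2 = ∑ i, y i ^ 2 := by
  rw [← Fin.sum_univ_eq_sum_range (fun k => sortedAbs y k ^ 2),
    ← Equiv.sum_comp (Tuple.sort fun i => -|y i|) fun i => y i ^ 2]
  refine sum_congr rfl fun j _ => ?_
  rw [sortedAbs_of_lt y j.isLt, sq_abs]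

theorem exists_card_eq_sum_abs_eq {k : ℕ} (hk : k < m) :
    ∃ I : Finset (Fin m), #I = k + 1 ∧ ∑ i ∈ I, |y i| = ∑ j ∈ range (k + 1), sortedAbs y j := by
  refine ⟨(Iic ⟨k, hk⟩).map (Tuple.sort fun i => -|y i|).toEmbedding, by simp, ?_⟩
  rw [Nat.range_succ_eq_Iic, ← Fin.map_valEmbedding_Iic (a := ⟨k, hk⟩), sum_map, sum_map]
  exact sum_congr rfl fun j _ => (sortedAbs_of_lt y j.isLt).symm

end DecreasingRearrangement

theorem exists_mem_B_inner_eq {m : ℕ} (y : EuclideanSpace ℝ (Fin m)) {I : Finset (Fin m)}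
    (hI : I.Nonempty) : ∃ b ∈ B m, inner ℝ y b = (∑ i ∈ I, |y i|) / √(#I : ℝ) := by
  set v : EuclideanSpace ℝ (Fin m) :=
    WithLp.toLp 2 fun i => if i ∈ I then (if 0 ≤ y i then 1 else -1) else 0
  have hvA : v ∈ A m := by
    refine ⟨fun i => by simp only [v]; split_ifs <;> simp, fun h => ?_⟩
    obtain ⟨i, hi⟩ := hI
    have hvi : v i = 0 := by rw [h]; rfl
    simp only [v, if_pos hi] at hvi
    split_ifs at hvi <;> norm_num at hvi
  have hinner : inner ℝ y v = ∑ i ∈ I, |y i| := by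
    simp only [PiLp.inner_apply, RCLike.inner_apply, Real.ringHom_apply, ite_mul, one_mul, neg_mul,
      zero_mul, sum_ite_mem, univ_inter, v]
    refine sum_congr rfl fun i _ => ?_
    split_ifs with h
    exacts [(abs_of_nonneg h).symm, (abs_of_neg (not_le.1 h)).symm]
  have hnorm : ‖v‖ = √(#I : ℝ) := by
    rw [EuclideanSpace.norm_eq]
    congr 1
    simp [v]
  refine ⟨‖v‖⁻¹ • v, ⟨v, hvA, rfl⟩, ?_⟩
  rw [real_inner_smul_right, hinner, hnorm, inv_mul_eq_div]

theorem sum_range_sqrt_succ_sub_sqrt_sq (n : ℕ) :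
    ∑ k ∈ range n, (√((k : ℝ) + 1) - √k) ^ 2 = ∑ k ∈ range n, 1 / (√((k : ℝ) + 1) + √k) ^ 2 := by
  refine sum_congr rfl fun k _ => ?_
  rw [Real.sqrt_add_one_sub_sqrt k.cast_nonneg, inv_pow, one_div]

theorem exists_mem_B_norm_le_inner_mul {m : ℕ} (hm : 0 < m) (y : EuclideanSpace ℝ (Fin m)) :
    ∃ b ∈ B m, ‖y‖ ≤ inner ℝ y b * √(∑ k ∈ range m, 1 / (√((k : ℝ) + 1) + √k) ^ 2) := by
  obtain ⟨k, hk, hle⟩ := (antitone_sortedAbs y).exists_sqrt_sum_sq_le (sortedAbs_nonneg y) hm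
  obtain ⟨I, hcard, hsum⟩ := exists_card_eq_sum_abs_eq y hk
  obtain ⟨b, hb, hinner⟩ := exists_mem_B_inner_eq y (I := I) (card_pos.1 (by omega))
  refine ⟨b, hb, ?_⟩
  rw [sum_range_sortedAbs_sq, sum_range_sqrt_succ_sub_sqrt_sq] at hle
  rw [hinner, hsum, hcard, EuclideanSpace.norm_eq]
  simpa using hle

theorem finite_A (m : ℕ) : (A m).Finite := by
  have hsub : A m ⊆ WithLp.ofLp ⁻¹' Set.pi Set.univ fun _ => ({-1, 0, 1} : Set ℝ) := by
    intro v hv i _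
    rcases hv.1 i with h | h | h <;> simp [h]
  exact ((Set.Finite.pi fun _ => Set.toFinite _).preimage (WithLp.ofLp_injective 2).injOn).subset
    hsub

theorem mem_convexHull_of_forall_exists_inner_le {E : Type*} [NormedAddCommGroup E]
    [InnerProductSpace ℝ E] [CompleteSpace E] {S : Set E} (hS : IsClosed (convexHull ℝ S))
    {x : E} (h : ∀ y, ∃ b ∈ S, inner ℝ y x ≤ inner ℝ y b) : x ∈ convexHull ℝ S := by
  rw [← iInter_halfSpaces_eq (convex_convexHull ℝ S) hS, Set.mem_iInter]
  intro l
  obtain ⟨b, hb, hle⟩ := h ((InnerProductSpace.toDual ℝ E).symm l)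
  exact ⟨b, subset_convexHull ℝ S hb, by simpa using hle⟩

theorem stmt19 (m : ℕ) (hm : 2 ≤ m) :
    Metric.closedBall (0 : EuclideanSpace ℝ (Fin m))
        ((Real.sqrt (∑ k ∈ Finset.range m, 1 / (Real.sqrt (k + 1) + Real.sqrt k) ^ 2))⁻¹)
      ⊆ convexHull ℝ (B m) := by
  set r := √(∑ k ∈ range m, 1 / (√((k : ℝ) + 1) + √k) ^ 2)
  have hr : 0 < r :=
    Real.sqrt_pos.2 (sum_pos (fun k _ => by positivity) (nonempty_range_iff.2 (by omega)))
  intro x hx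
  rw [mem_closedBall_zero_iff] at hx
  refine mem_convexHull_of_forall_exists_inner_le
    (((finite_A m).image _).isClosed_convexHull ℝ) fun y => ?_
  obtain ⟨b, hb, hy⟩ := exists_mem_B_norm_le_inner_mul (by omega) y
  refine ⟨b, hb, ?_⟩
  calc inner ℝ y x ≤ ‖y‖ * ‖x‖ := real_inner_le_norm y x
    _ ≤ inner ℝ y b * r * r⁻¹ := by
      have := (norm_nonneg y).trans hy
      gcongr
    _ = inner ℝ y b := by field_simp
end
end
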